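/- Let B be a set of b ≥ 3 blue points in convex position in the plane, and suppose R is a set of red points inside conv(B) such that no closed triangle spanned by three points of B is free of red points. Then |R| ≥ b − 2. -/

import Mathlib

abbrev Pt := ℝ × ℝ

def GenPos (P : Finset Pt) : Prop :=
  ∀ p ∈ P, ∀ q ∈ P, ∀ r ∈ P, p ≠ q → p ≠ r → q ≠ r → ¬ Collinear ℝ ({p, q, r} : Set Pt)

/-!
Red points that are also blue lie in no blue triangle other than those having them as a vertex,
so after removing `B ∩ R` from both sets we may assume `B` and `R` disjoint. Fix `v ∈ B`. A line
separates `v` from the other blue points, which lets us measure the direction of each ray from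
`v` into that side by a real slope. General position makes the slopes of the `b - 1` remaining
blue points distinct, and the triangle spanned by `v` and two of them with consecutive slopes
contains a red point whose slope lies strictly between theirs. So the `b - 2` gaps between
consecutive blue slopes contain slopes of `b - 2` distinct red points.
-/

open Finset

theorem Finset.card_le_card_add_one_of_forall_exists_mem_Ioo {α : Type*} [LinearOrder α]
    (S T : Finset α) (h : ∀ a ∈ S, ∀ b ∈ S, a < b → ∃ t ∈ T, a < t ∧ t < b) :
    #S ≤ #T + 1 := by
  induction S using Finset.induction_on_max generalizing T with
  | empty => simp
  | insert a S hlt ih =>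
    rcases S.eq_empty_or_nonempty with rfl | hS
    · simp
    set m := S.max' hS
    obtain ⟨t₀, ht₀, hmt₀, -⟩ := h m (mem_insert_of_mem (S.max'_mem hS)) a (mem_insert_self a S)
      (hlt m (S.max'_mem hS))
    have hT : #(T.filter (· < m)) + 1 ≤ #T :=
      card_lt_card (filter_ssubset.2 ⟨t₀, ht₀, hmt₀.not_gt⟩)
    have hS' := ih (T.filter (· < m)) fun x hx y hy hxy ↦ by
      obtain ⟨t, ht, hxt, hty⟩ := h x (mem_insert_of_mem hx) y (mem_insert_of_mem hy) hxy
      exact ⟨t, mem_filter.2 ⟨ht, hty.trans_le (S.le_max' y hy)⟩, hxt, hty⟩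
    rw [card_insert_of_notMem fun ha ↦ (hlt a ha).false]
    omega

section SightSlope

variable {E : Type*} [AddCommGroup E] [Module ℝ E] (φ ψ : E →ₗ[ℝ] ℝ)

noncomputable def sightSlope (v x : E) : ℝ := ψ (x - v) / φ (x - v)

variable {φ ψ} {v w w' z : E}

lemma sightSlope_neg_right (x : E) : sightSlope φ (-ψ) v x = -sightSlope φ ψ v x := by
  simp only [sightSlope, LinearMap.neg_apply, neg_div]

lemma AffineMap.lineMap_sub_left (v z : E) (k : ℝ) : AffineMap.lineMap v z k - v = k • (z - v) :=
  AffineMap.lineMap_vsub_left v z k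

lemma sightSlope_lineMap {k : ℝ} (hk : k ≠ 0) :
    sightSlope φ ψ v (AffineMap.lineMap v z k) = sightSlope φ ψ v z := by
  simp only [sightSlope, AffineMap.lineMap_sub_left, map_smul, smul_eq_mul]
  exact mul_div_mul_left _ _ hk

lemma collinear_of_sightSlope_eq (hφψ : Function.Injective (φ.prod ψ))
    (hw : φ (w - v) ≠ 0) (hw' : φ (w' - v) ≠ 0) (h : sightSlope φ ψ v w = sightSlope φ ψ v w') :
    Collinear ℝ ({v, w, w'} : Set E) := by
  set k := φ (w' - v) / φ (w - v)
  have hφk : φ (w' - v) = k * φ (w - v) := (div_mul_cancel₀ _ hw).symm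
  have hψk : ψ (w' - v) = k * ψ (w - v) := by
    rw [sightSlope, sightSlope, div_eq_div_iff hw hw'] at h
    rw [div_mul_eq_mul_div, eq_div_iff hw]
    linarith
  have hw'k : w' - v = k • (w - v) := hφψ (by simp [hφk, hψk])
  have hw'_mem : w' ∈ line[ℝ, v, w] := by
    rw [eq_add_of_sub_eq hw'k, ← AffineMap.lineMap_sub_left, sub_add_cancel]
    exact AffineMap.lineMap_mem_affineSpan_pair k v w
  rw [Set.pair_comm, Set.insert_comm]
  exact collinear_insert_of_mem_affineSpan_pair hw'_mem

lemma sub_mem_segment_sub (hz : z ∈ segment ℝ w w') : z - v ∈ segment ℝ (w - v) (w' - v) := by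
  rw [← mem_segment_translate ℝ v]
  simpa using hz

lemma LinearMap.map_sub_pos_of_mem_segment (hw : 0 < φ (w - v)) (hw' : 0 < φ (w' - v))
    (hz : z ∈ segment ℝ w w') :
    0 < φ (z - v) :=
  (convex_halfSpace_gt φ.isLinear 0).segment_subset hw hw' (sub_mem_segment_sub hz)

lemma sightSlope_le_iff {x : E} (hx : 0 < φ (x - v)) {s : ℝ} :
    sightSlope φ ψ v x ≤ s ↔ (ψ - s • φ) (x - v) ≤ 0 := by
  rw [sightSlope, div_le_iff₀ hx, LinearMap.sub_apply, LinearMap.smul_apply, smul_eq_mul,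
    sub_nonpos]

lemma sightSlope_le_of_mem_segment (hw : 0 < φ (w - v)) (hw' : 0 < φ (w' - v))
    (hz : z ∈ segment ℝ w w') {s : ℝ} (h : sightSlope φ ψ v w ≤ s) (h' : sightSlope φ ψ v w' ≤ s) :
    sightSlope φ ψ v z ≤ s := by
  rw [sightSlope_le_iff hw] at h
  rw [sightSlope_le_iff hw'] at h'
  rw [sightSlope_le_iff (LinearMap.map_sub_pos_of_mem_segment hw hw' hz)]
  exact (convex_halfSpace_le (ψ - s • φ).isLinear 0).segment_subset h h' (sub_mem_segment_sub hz)

lemma le_sightSlope_of_mem_segment (hw : 0 < φ (w - v)) (hw' : 0 < φ (w' - v))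
    (hz : z ∈ segment ℝ w w') {s : ℝ} (h : s ≤ sightSlope φ ψ v w) (h' : s ≤ sightSlope φ ψ v w') :
    s ≤ sightSlope φ ψ v z := by
  have := sightSlope_le_of_mem_segment (ψ := -ψ) hw hw' hz (s := -s)
  simp only [sightSlope_neg_right, neg_le_neg_iff] at this
  exact this h h'

lemma sightSlope_mem_Ioo_of_mem_convexHull (hφψ : Function.Injective (φ.prod ψ))
    (hw : 0 < φ (w - v)) (hw' : 0 < φ (w' - v)) (hlt : sightSlope φ ψ v w < sightSlope φ ψ v w')
    {r : E} (hr : r ∈ convexHull ℝ {v, w, w'}) (hvwr : ¬ Collinear ℝ ({v, w, r} : Set E))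
    (hvw'r : ¬ Collinear ℝ ({v, w', r} : Set E)) :
    sightSlope φ ψ v r ∈ Set.Ioo (sightSlope φ ψ v w) (sightSlope φ ψ v w') := by
  rw [convexHull_insert (Set.insert_nonempty w {w'}), convexHull_pair,
    convexJoin_singleton_left, Set.mem_iUnion₂] at hr
  obtain ⟨z, hz, hr⟩ := hr
  rw [segment_eq_image_lineMap] at hr
  obtain ⟨k, -, rfl⟩ := hr
  set r := AffineMap.lineMap v z k
  have hk : k ≠ 0 := by
    rintro rfl
    exact hvwr (by simp [r, collinear_pair])
  have hz_pos := LinearMap.map_sub_pos_of_mem_segment hw hw' hz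
  have hr_ne : φ (r - v) ≠ 0 := by
    rw [AffineMap.lineMap_sub_left, map_smul, smul_eq_mul]
    exact mul_ne_zero hk hz_pos.ne'
  have hwr : sightSlope φ ψ v w ≠ sightSlope φ ψ v r :=
    fun h ↦ hvwr (collinear_of_sightSlope_eq hφψ hw.ne' hr_ne h)
  have hw'r : sightSlope φ ψ v w' ≠ sightSlope φ ψ v r :=
    fun h ↦ hvw'r (collinear_of_sightSlope_eq hφψ hw'.ne' hr_ne h)
  rw [sightSlope_lineMap hk] at hwr hw'r ⊢
  exact ⟨(le_sightSlope_of_mem_segment hw hw' hz le_rfl hlt.le).lt_of_ne hwr,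
    (sightSlope_le_of_mem_segment hw hw' hz hlt.le le_rfl).lt_of_ne hw'r.symm⟩

end SightSlope

lemma exists_linearMap_pos_sub_of_notMem_convexHull {E : Type*} [NormedAddCommGroup E]
    [NormedSpace ℝ E] {C : Finset E} {v : E} (hv : v ∉ convexHull ℝ (↑C : Set E)) :
    ∃ φ : E →ₗ[ℝ] ℝ, ∀ w ∈ C, 0 < φ (w - v) := by
  obtain ⟨f, u, hfv, hfC⟩ := geometric_hahn_banach_point_closed (convex_convexHull ℝ _)
    (C.finite_toSet.isClosed_convexHull ℝ) hv
  refine ⟨f.toLinearMap, fun w hw ↦ ?_⟩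
  have := hfC w (subset_convexHull ℝ _ (mem_coe.2 hw))
  simp only [ContinuousLinearMap.coe_coe, map_sub]
  linarith

lemma GenPos.mono {P Q : Finset Pt} (hPQ : P ⊆ Q) (hQ : GenPos Q) : GenPos P :=
  fun p hp q hq r hr ↦ hQ p (hPQ hp) q (hPQ hq) r (hPQ hr)

lemma LinearMap.exists_injective_prod {φ : Pt →ₗ[ℝ] ℝ} (hφ : φ ≠ 0) :
    ∃ ψ : Pt →ₗ[ℝ] ℝ, Function.Injective (φ.prod ψ) := by
  set a := φ (1, 0)
  set b := φ (0, 1)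
  have hφ_apply : ∀ x : Pt, φ x = a * x.1 + b * x.2 := fun x ↦ by
    rw [show x = x.1 • ((1 : ℝ), (0 : ℝ)) + x.2 • ((0 : ℝ), (1 : ℝ)) by ext <;> simp, map_add,
      map_smul, map_smul, smul_eq_mul, smul_eq_mul]
    simp [a, b, mul_comm]
  have hab : a ^ 2 + b ^ 2 ≠ 0 := fun h ↦ hφ <| LinearMap.ext fun x ↦ by
    rw [hφ_apply, show a = 0 by nlinarith, show b = 0 by nlinarith]
    simp
  -- `ψ` is `φ` precomposed with a quarter turn
  refine ⟨a • LinearMap.snd ℝ ℝ ℝ - b • LinearMap.fst ℝ ℝ ℝ, (injective_iff_map_eq_zero _).2 ?_⟩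
  intro y hy
  simp only [LinearMap.prod_apply, Function.prod, Prod.mk_eq_zero, hφ_apply, LinearMap.sub_apply,
    LinearMap.smul_apply, LinearMap.coe_fst, LinearMap.coe_snd, smul_eq_mul] at hy
  obtain ⟨h₁, h₂⟩ := hy
  have hy₁ : (a ^ 2 + b ^ 2) * y.1 = 0 := by linear_combination a * h₁ - b * h₂
  have hy₂ : (a ^ 2 + b ^ 2) * y.2 = 0 := by linear_combination b * h₁ + a * h₂
  exact Prod.ext ((mul_eq_zero.1 hy₁).resolve_left hab) ((mul_eq_zero.1 hy₂).resolve_left hab)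

lemma card_erase_le_card_add_one_of_forall_exists_mem_convexHull (B R : Finset Pt) {v : Pt}
    (hvB : v ∈ B) (hv : v ∉ convexHull ℝ (↑(B.erase v) : Set Pt)) (hgp : GenPos (B ∪ R))
    (hBR : Disjoint B R)
    (htri : ∀ w ∈ B, ∀ w' ∈ B, v ≠ w → v ≠ w' → w ≠ w' → ∃ r ∈ R, r ∈ convexHull ℝ {v, w, w'}) :
    #(B.erase v) ≤ #R + 1 := by
  rcases (B.erase v).eq_empty_or_nonempty with hC | ⟨w₀, hw₀⟩
  · simp [hC]
  obtain ⟨φ, hφ⟩ := exists_linearMap_pos_sub_of_notMem_convexHull hv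
  obtain ⟨ψ, hφψ⟩ := LinearMap.exists_injective_prod (φ := φ)
    fun h ↦ (hφ w₀ hw₀).ne' (by simp [h])
  set key := sightSlope φ ψ v
  have hinj : Set.InjOn key ↑(B.erase v) := by
    intro w hw w' hw' h
    by_contra hne
    exact hgp v (mem_union_left _ hvB) w (mem_union_left _ (mem_of_mem_erase hw))
      w' (mem_union_left _ (mem_of_mem_erase hw')) (ne_of_mem_erase hw).symm
      (ne_of_mem_erase hw').symm hne
      (collinear_of_sightSlope_eq hφψ (hφ w hw).ne' (hφ w' hw').ne' h)
  have hsep : ∀ a ∈ (B.erase v).image key, ∀ b ∈ (B.erase v).image key, a < b →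
      ∃ t ∈ R.image key, a < t ∧ t < b := by
    simp only [forall_mem_image]
    intro w hw w' hw' hlt
    have hwB := mem_of_mem_erase hw
    have hw'B := mem_of_mem_erase hw'
    obtain ⟨r, hr, hr_mem⟩ := htri w hwB w' hw'B (ne_of_mem_erase hw).symm
      (ne_of_mem_erase hw').symm (fun h ↦ hlt.ne (congrArg key h))
    have hrB : r ∉ B := disjoint_right.1 hBR hr
    have hgp_r : ∀ x ∈ B, x ≠ v → ¬ Collinear ℝ ({v, x, r} : Set Pt) := fun x hx hxv ↦
      hgp v (mem_union_left _ hvB) x (mem_union_left _ hx) r (mem_union_right _ hr) hxv.symm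
        (fun h ↦ hrB (h ▸ hvB)) (fun h ↦ hrB (h ▸ hx))
    exact ⟨key r, mem_image_of_mem _ hr, sightSlope_mem_Ioo_of_mem_convexHull hφψ (hφ w hw)
      (hφ w' hw') hlt hr_mem (hgp_r w hwB (ne_of_mem_erase hw))
      (hgp_r w' hw'B (ne_of_mem_erase hw'))⟩
  calc #(B.erase v) = #((B.erase v).image key) := (card_image_of_injOn hinj).symm
    _ ≤ #(R.image key) + 1 := card_le_card_add_one_of_forall_exists_mem_Ioo _ _ hsep
    _ ≤ #R + 1 := Nat.add_le_add_right card_image_le 1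

theorem card_le_card_add_two_of_convexIndependent (B R : Finset Pt)
    (hB : ConvexIndependent ℝ ((↑) : ↥(B : Set Pt) → Pt)) (hgp : GenPos (B ∪ R))
    (hBR : Disjoint B R)
    (hno : ∀ s ⊆ B, #s = 3 → ∃ r ∈ R, r ∈ convexHull ℝ (↑s : Set Pt)) :
    #B ≤ #R + 2 := by
  rcases B.eq_empty_or_nonempty with rfl | ⟨v, hv⟩
  · simp
  have hv_out : v ∉ convexHull ℝ (↑(B.erase v) : Set Pt) := by
    rw [coe_erase]
    exact convexIndependent_set_iff_notMem_convexHull_sdiff.1 hB v hv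
  have := card_erase_le_card_add_one_of_forall_exists_mem_convexHull B R hv hv_out hgp hBR
    fun w hw w' hw' hvw hvw' hww' ↦ by
      simpa using hno {v, w, w'} (by simp [insert_subset_iff, hv, hw, hw'])
        (card_eq_three.2 ⟨v, w, w', hvw, hvw', hww', rfl⟩)
  rw [card_erase_of_mem hv] at this
  omega

theorem stmt12_general (B R : Finset Pt)
    (hconvpos : ∀ p ∈ B, p ∉ convexHull ℝ (↑(B.erase p) : Set Pt))
    (hgp : GenPos (B ∪ R))
    (hno : ∀ s ⊆ B, s.card = 3 → ∃ r ∈ R, r ∈ convexHull ℝ (↑s : Set Pt)) :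
    B.card ≤ R.card + 2 := by
  have hB : ConvexIndependent ℝ ((↑) : ↥(B : Set Pt) → Pt) :=
    convexIndependent_set_iff_notMem_convexHull_sdiff.2 fun p hp ↦ by
      simpa using hconvpos p hp
  have hno' : ∀ s ⊆ B \ R, #s = 3 → ∃ r ∈ R \ B, r ∈ convexHull ℝ (↑s : Set Pt) := by
    intro s hs hs3
    have hsB : s ⊆ B := hs.trans sdiff_subset
    obtain ⟨r, hr, hrs⟩ := hno s hsB hs3
    refine ⟨r, mem_sdiff.2 ⟨hr, fun hrB ↦ ?_⟩, hrs⟩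
    have hr_mem : r ∈ s :=
      convexIndependent_set_iff_inter_convexHull_subset.1 hB s (coe_subset.2 hsB) ⟨hrB, hrs⟩
    exact (mem_sdiff.1 (hs hr_mem)).2 hr
  have := card_le_card_add_two_of_convexIndependent (B \ R) (R \ B)
    (hB.mono (coe_subset.2 sdiff_subset)) (hgp.mono (union_subset_union sdiff_subset sdiff_subset))
    disjoint_sdiff_sdiff hno'
  have hB_card := card_sdiff_add_card_inter B R
  have hR_card := card_sdiff_add_card_inter R B
  rw [inter_comm] at hR_card
  omega

/-- If `B` is a set of `b ≥ 3` blue points in convex position and `R` is a set of red points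
inside `conv(B)` such that every closed triangle spanned by three blue points contains a red
point, then `|R| ≥ b - 2`. -/
theorem stmt12 (B R : Finset Pt) (hb : 3 ≤ B.card)
    (hconvpos : ∀ p ∈ B, p ∉ convexHull ℝ (↑(B.erase p) : Set Pt))
    (hgp : GenPos (B ∪ R))
    (hR : ∀ r ∈ R, r ∈ convexHull ℝ (↑B : Set Pt))
    (hno : ∀ s ⊆ B, s.card = 3 → ∃ r ∈ R, r ∈ convexHull ℝ (↑s : Set Pt)) :
    B.card ≤ R.card + 2 :=
  stmt12_general B R hconvpos hgp hno
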